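/- For every d ≥ 1 there is a constant C = C(d) such that for all n ≥ 1, |e_o(B_n) − (n/ω_d)^{2/d}| ≤ C n^{1/d}. -/

import Mathlib

open scoped BigOperators Pointwise symmDiff
open MeasureTheory Filter

noncomputable section
open scoped Classical
namespace RotorRouterPaper

/-- Sites of the lattice `ℤ^d`. -/
abbrev Site (d : ℕ) := Fin d → ℤ

/-- The `i`-th standard basis vector of `ℤ^d`. -/
def unitVec (d : ℕ) (i : Fin d) : Site d := fun j => if j = i then 1 else 0

/-- Squared Euclidean norm of a lattice point. -/
def nsq {d : ℕ} (x : Site d) : ℝ := ∑ i, ((x i : ℝ)) ^ 2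

/-- Euclidean norm of a lattice point. -/
def enorm {d : ℕ} (x : Site d) : ℝ := Real.sqrt (nsq x)

/-- Adjacency `x ∼ y`: Euclidean distance one. -/
def Adj {d : ℕ} (x y : Site d) : Prop := nsq (x - y) = 1

/-- `ω_d`, the Lebesgue volume of the unit ball in `ℝ^d`. -/
def ballVol (d : ℕ) : ℝ := (volume (Metric.ball (0 : EuclideanSpace ℝ (Fin d)) 1)).toReal

/-- The lattice ball `B_n = {y ∈ ℤ^d : ω_d ‖y‖^d < n}`. -/
def lball (d n : ℕ) : Set (Site d) := {y | ballVol d * enorm y ^ d < (n : ℝ)}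

/-- Characterization of the expected exit time function of a (finite) region `A ⊆ ℤ^d`:
it vanishes off `A` and its discrete Laplacian is `-1` on `A`. -/
def IsExitFun (d : ℕ) (A : Set (Site d)) (e : Site d → ℝ) : Prop :=
  (∀ x, x ∉ A → e x = 0) ∧
  ∀ x ∈ A, (1 / (2 * (d : ℝ))) * (∑ i, (e (x + unitVec d i) + e (x - unitVec d i))) - e x = -1

/-- The expected exit time function `x ↦ e_x(A)` (the unique function satisfying
`IsExitFun` when `A` is finite). -/
def exitFun (d : ℕ) (A : Set (Site d)) : Site d → ℝ :=
  if h : ∃ e, IsExitFun d A e then h.choose else 0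

/-- `ē(A) = sup_x e_x(A)`. -/
def ebar (d : ℕ) (A : Set (Site d)) : ℝ := sSup (Set.range (exitFun d A))

/-- `φ(n) = sup {ē(A) - e_o(B_n) : A ⊆ ℤ^d, |A| = n}`. -/
def phi (d n : ℕ) : ℝ :=
  sSup {t | ∃ A : Set (Site d), A.Finite ∧ A.ncard = n ∧ t = ebar d A - exitFun d (lball d n) 0}

/-- `Φ(n) = ∑_{j=1}^n φ(j)`. -/
def PhiSum (d n : ℕ) : ℝ := ∑ j ∈ Finset.Icc 1 n, phi d j

/-- `ψ(A) = ∑_{x ∈ A} ‖x‖²`. -/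
def psi {d : ℕ} (A : Set (Site d)) : ℝ := ∑ᶠ x ∈ A, nsq x

/-- A cardinal direction in `ℤ^d`: one of `±e_1, …, ±e_d`. -/
abbrev Dir (d : ℕ) := Fin d × Bool

/-- The lattice step vector of a cardinal direction. -/
def dirVec (d : ℕ) (ε : Dir d) : Site d := if ε.2 then unitVec d ε.1 else -unitVec d ε.1

/-- A configuration of rotor stacks `r` (with `r x i` the direction used for the
`(i+1)`-st visit to `x`) has discrepancy at most `D` if for every site, direction and `m ≥ 1`,
among the first `m` rotors of the stack each direction occurs `m/(2d)` times up to error `D`. -/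
def HasDiscrepancy (d : ℕ) (D : ℝ) (r : Site d → ℕ → Dir d) : Prop :=
  ∀ (x : Site d) (ε : Dir d) (m : ℕ), 1 ≤ m →
    |(({i | i < m ∧ r x i = ε} : Set ℕ).ncard : ℝ) - (m : ℝ) / (2 * (d : ℝ))| ≤ D

/-- One step of rotor-router walk on a state (current position, visit counts so far):
the particle at `p` being visited for the `(c p + 1)`-st time moves in direction
`r p (c p)` and the visit count at `p` increases by one. -/
def rstep {d : ℕ} (r : Site d → ℕ → Dir d) (s : Site d × (Site d → ℕ)) :
    Site d × (Site d → ℕ) :=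
  (s.1 + dirVec d (r s.1 (s.2 s.1)), Function.update s.2 s.1 (s.2 s.1 + 1))

/-- The state after `t` steps of rotor-router walk started at the origin with visit counts `c`. -/
def walkState {d : ℕ} (r : Site d → ℕ → Dir d) (c : Site d → ℕ) (t : ℕ) :
    Site d × (Site d → ℕ) :=
  (rstep r)^[t] (0, c)

/-- The number of steps until the rotor-router walk started at the origin
(with carried-over visit counts `c`) first leaves the region `A`. -/
def exitSteps {d : ℕ} (r : Site d → ℕ → Dir d) (A : Set (Site d)) (c : Site d → ℕ) : ℕ :=
  sInf {t | (walkState r c t).1 ∉ A}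

/-- The state of rotor-router aggregation after `n` particles have walked and settled:
`(aggState r n).1` is the occupied region `A_{n+1}`, `(aggState r n).2.1` the accumulated
visit counts, and `(aggState r n).2.2` the total number `T_n` of steps taken so far. -/
def aggState {d : ℕ} (r : Site d → ℕ → Dir d) : ℕ → Set (Site d) × (Site d → ℕ) × ℕ
  | 0 => ({0}, fun _ => 0, 0)
  | n + 1 =>
      let s := aggState r n
      let τ := exitSteps r s.1 s.2.1
      (insert (walkState r s.2.1 τ).1 s.1, (walkState r s.2.1 τ).2, s.2.2 + τ)

/-- The region `A_n` of rotor-router aggregation (for `n ≥ 1`). -/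
def aggRegion {d : ℕ} (r : Site d → ℕ → Dir d) (n : ℕ) : Set (Site d) :=
  (aggState r (n - 1)).1

/-- `T_n`, the total number of steps taken by the first `n` particles. -/
def totalSteps {d : ℕ} (r : Site d → ℕ → Dir d) (n : ℕ) : ℕ := (aggState r n).2.2

/-- `A^□ = A + [-1/2,1/2]^d ⊆ ℝ^d`. -/
def box (d : ℕ) (A : Set (Site d)) : Set (EuclideanSpace ℝ (Fin d)) :=
  {z | ∃ x ∈ A, ∀ i, |z i - (x i : ℝ)| ≤ 1 / 2}

/-- The closed Euclidean ball of unit volume centered at the origin of `ℝ^d`. -/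
def unitVolBall (d : ℕ) : Set (EuclideanSpace ℝ (Fin d)) :=
  Metric.closedBall 0 (ballVol d ^ (-(1 : ℝ) / (d : ℝ)))

/-- `A ⊆ ℤ^d` is orthoconvex if every line parallel to a coordinate axis meets `A`
in an interval. -/
def Orthoconvex (d : ℕ) (A : Set (Site d)) : Prop :=
  ∀ x ∈ A, ∀ i : Fin d, ∀ k : ℤ, 0 < k → x + k • unitVec d i ∈ A →
    ∀ j : ℤ, 0 < j → j < k → x + j • unitVec d i ∈ A

/-- The nonnegative orthant `Q ⊆ ℤ^d`. -/
def orthant (d : ℕ) : Set (Site d) := {x | ∀ i, 0 ≤ x i}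

/-- The cube `C(o,r) = {x : ‖x‖_∞ ≤ r}`. -/
def cubeSet (d : ℕ) (r : ℕ) : Set (Site d) := {x | ∀ i, |x i| ≤ (r : ℤ)}

/-- The boundary `∂C(o,r) = {x : ‖x‖_∞ = r + 1 and x ∼ y for some y ∈ C(o,r)}`. -/
def cubeBdry (d : ℕ) (r : ℕ) : Set (Site d) :=
  {x | (∀ i, |x i| ≤ (r : ℤ) + 1) ∧ (∃ i, |x i| = (r : ℤ) + 1) ∧ ∃ y ∈ cubeSet d r, Adj x y}

/-- Characterization of `h_r(x) = P_x(T_Q > T_{∂C(o,r)})`: it vanishes on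
`Q ∩ (C(o,r) ∪ ∂C(o,r))`, equals `1` on `∂C(o,r) ∖ Q`, is discrete harmonic on
`C(o,r) ∖ Q`, and (as a normalization) vanishes off `C(o,r) ∪ ∂C(o,r)`. -/
def IsOrthHarm (d : ℕ) (r : ℕ) (h : Site d → ℝ) : Prop :=
  (∀ x, x ∉ cubeSet d r ∪ cubeBdry d r → h x = 0) ∧
  (∀ x ∈ orthant d ∩ (cubeSet d r ∪ cubeBdry d r), h x = 0) ∧
  (∀ x ∈ cubeBdry d r \ orthant d, h x = 1) ∧
  (∀ x ∈ cubeSet d r \ orthant d,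
    h x = (1 / (2 * (d : ℝ))) * ∑ i, (h (x + unitVec d i) + h (x - unitVec d i)))

/-- The function `h_r` of the previous characterization. -/
def orthHarm (d : ℕ) (r : ℕ) : Site d → ℝ :=
  if h : ∃ f, IsOrthHarm d r f then h.choose else 0

/-- `p(k,r) = sup {h_r(x) : ‖x‖_∞ ≤ k}`. -/
def pkr (d k r : ℕ) : ℝ :=
  sSup {t | ∃ x : Site d, (∀ i, |x i| ≤ (k : ℤ)) ∧ t = orthHarm d r x}

/-- The exponent `γ_d` of Theorem 3.1. -/
def gam (d : ℕ) : ℝ :=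
  if d = 1 then 1 else if d = 2 then 1 / 3
  else (2 : ℝ) ^ (-(d : ℝ)) / (2 * (d : ℝ) ^ 2 * Real.log 3)

/-!
The discrete Laplacian of `x ↦ ‖x‖²` is identically `1`, so for an exit time function `e` of a
finite set `A` the function `e + ‖·‖²` is harmonic on `A` and equals `‖·‖²` on `∂A`. By the
maximum principle `e_o(A) = e_o(A) + ‖o‖²` lies between the extreme values of `‖·‖²` on `∂A`. For
`A = B_n`, the Euclidean ball of radius `R = (n/ω_d)^{1/d}`, these lie in `[R², (R + 1)²]`, so
`|e_o(B_n) - R²| ≤ 2R + 1`. The maximum principle also shows that the Laplacian is injective on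
functions supported in `A`, which gives the existence of `e` by finite dimensionality.
-/

variable {d : ℕ}

def laplacian (d : ℕ) : (Site d → ℝ) →ₗ[ℝ] (Site d → ℝ) where
  toFun f x := (1 / (2 * (d : ℝ))) * (∑ i, (f (x + unitVec d i) + f (x - unitVec d i))) - f x
  map_add' f g := by
    ext x
    simp only [Pi.add_apply, Finset.sum_add_distrib]
    ring
  map_smul' c f := by
    ext x
    simp only [Pi.smul_apply, smul_eq_mul, RingHom.id_apply, ← mul_add, ← Finset.mul_sum]
    ring

lemma laplacian_apply (f : Site d → ℝ) (x : Site d) :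
    laplacian d f x =
      (1 / (2 * (d : ℝ))) * (∑ i, (f (x + unitVec d i) + f (x - unitVec d i))) - f x :=
  rfl

lemma isExitFun_iff {A : Set (Site d)} {e : Site d → ℝ} :
    IsExitFun d A e ↔ (∀ x ∉ A, e x = 0) ∧ ∀ x ∈ A, laplacian d e x = -1 :=
  Iff.rfl

/-- `∂A`, with `x ∼ y` spelled out as `y = x ± e_i`. -/
def bdry (d : ℕ) (A : Set (Site d)) : Set (Site d) :=
  {x | x ∉ A ∧ ∃ i, x + unitVec d i ∈ A ∨ x - unitVec d i ∈ A}

lemma add_unitVec_mem_or_mem_bdry {A : Set (Site d)} {x : Site d} (hx : x ∈ A) (i : Fin d) :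
    x + unitVec d i ∈ A ∨ x + unitVec d i ∈ bdry d A :=
  or_iff_not_imp_left.mpr fun h => ⟨h, i, Or.inr (by simpa using hx)⟩

lemma sub_unitVec_mem_or_mem_bdry {A : Set (Site d)} {x : Site d} (hx : x ∈ A) (i : Fin d) :
    x - unitVec d i ∈ A ∨ x - unitVec d i ∈ bdry d A :=
  or_iff_not_imp_left.mpr fun h => ⟨h, i, Or.inl (by simpa using hx)⟩

lemma apply_add_unitVec_eq_of_laplacian_nonneg {f : Site d → ℝ} {x : Site d}
    (hΔ : 0 ≤ laplacian d f x)
    (hle : ∀ j, f (x + unitVec d j) ≤ f x ∧ f (x - unitVec d j) ≤ f x) (i : Fin d) :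
    f (x + unitVec d i) = f x := by
  have hd : (0 : ℝ) < 2 * d := by have := i.pos; positivity
  by_contra hne
  have hlt : ∑ j, (f (x + unitVec d j) + f (x - unitVec d j)) < ∑ _j : Fin d, (f x + f x) :=
    Finset.sum_lt_sum (fun j _ => add_le_add (hle j).1 (hle j).2)
      ⟨i, Finset.mem_univ _, add_lt_add_of_lt_of_le (lt_of_le_of_ne (hle i).1 hne) (hle i).2⟩
  rw [Finset.sum_const, Finset.card_univ, Fintype.card_fin, nsmul_eq_mul] at hlt
  rw [laplacian_apply, sub_nonneg, one_div, le_inv_mul_iff₀ hd] at hΔ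
  linarith

theorem le_of_laplacian_nonneg (hd : 0 < d) {A : Set (Site d)} (hA : A.Finite)
    {f : Site d → ℝ} {M : ℝ} (hΔ : ∀ x ∈ A, 0 ≤ laplacian d f x)
    (hbdry : ∀ x ∈ bdry d A, f x ≤ M) {x : Site d} (hx : x ∈ A) : f x ≤ M := by
  by_contra! hMx
  obtain ⟨xm, hxmA, hxm⟩ := hA.toFinset.exists_max_image f ⟨x, hA.mem_toFinset.mpr hx⟩
  simp only [Set.Finite.mem_toFinset] at hxmA hxm
  have hMm : M < f xm := hMx.trans_le (hxm x hx)
  have hle : ∀ y, y ∈ A ∨ y ∈ bdry d A → f y ≤ f xm := by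
    rintro y (hy | hy)
    · exact hxm y hy
    · exact (hbdry y hy).trans hMm.le
  -- the `+e₀` neighbour of a maximiser with largest first coordinate is again a maximiser,
  -- so it lies in `∂A`
  let i₀ : Fin d := ⟨0, hd⟩
  obtain ⟨x₀, hx₀S, hx₀⟩ := (hA.toFinset.filter (f · = f xm)).exists_max_image (· i₀)
    ⟨xm, by simpa using hxmA⟩
  simp only [Finset.mem_filter, Set.Finite.mem_toFinset] at hx₀S hx₀
  obtain ⟨hx₀A, hfx₀⟩ := hx₀S
  have hnext : f (x₀ + unitVec d i₀) = f xm := by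
    rw [← hfx₀]
    refine apply_add_unitVec_eq_of_laplacian_nonneg (hΔ x₀ hx₀A) (fun j => ?_) i₀
    rw [hfx₀]
    exact ⟨hle _ (add_unitVec_mem_or_mem_bdry hx₀A j), hle _ (sub_unitVec_mem_or_mem_bdry hx₀A j)⟩
  rcases add_unitVec_mem_or_mem_bdry hx₀A i₀ with hnextA | hnextB
  · have := hx₀ _ ⟨hnextA, hnext⟩
    simp [unitVec] at this
  · linarith [hbdry _ hnextB]

theorem le_of_laplacian_nonpos (hd : 0 < d) {A : Set (Site d)} (hA : A.Finite)
    {f : Site d → ℝ} {M : ℝ} (hΔ : ∀ x ∈ A, laplacian d f x ≤ 0)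
    (hbdry : ∀ x ∈ bdry d A, M ≤ f x) {x : Site d} (hx : x ∈ A) : M ≤ f x := by
  have := le_of_laplacian_nonneg hd hA (f := -f) (M := -M)
    (fun y hy => by simpa using hΔ y hy) (fun y hy => by simpa using hbdry y hy) hx
  simpa using this

theorem exists_isExitFun (hd : 0 < d) {A : Set (Site d)} (hA : A.Finite) :
    ∃ e, IsExitFun d A e := by
  have := hA.to_subtype
  let ext := Function.ExtendByZero.linearMap ℝ ((↑) : A → Site d)
  have ext_of_not_mem : ∀ g x, x ∉ A → ext g x = 0 := fun g x hx =>
    Function.extend_apply' _ _ _ fun ⟨y, hy⟩ => hx (hy ▸ y.2)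
  let L : (A → ℝ) →ₗ[ℝ] (A → ℝ) := LinearMap.funLeft ℝ ℝ (↑) ∘ₗ laplacian d ∘ₗ ext
  have hL : Function.Injective L := by
    rw [← LinearMap.ker_eq_bot, LinearMap.ker_eq_bot']
    intro g hg
    have hΔ : ∀ x ∈ A, laplacian d (ext g) x = 0 := fun x hx => congr_fun hg ⟨x, hx⟩
    have hbdry : ∀ x ∈ bdry d A, ext g x = 0 := fun x hx => ext_of_not_mem g x hx.1
    ext x
    rw [Pi.zero_apply, ← Subtype.val_injective.extend_apply g 0 x]
    exact le_antisymm
      (le_of_laplacian_nonneg hd hA (fun y hy => (hΔ y hy).ge) (fun y hy => (hbdry y hy).le) x.2)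
      (le_of_laplacian_nonpos hd hA (fun y hy => (hΔ y hy).le) (fun y hy => (hbdry y hy).ge) x.2)
  obtain ⟨g, hg⟩ := LinearMap.injective_iff_surjective.mp hL (fun _ => -1)
  exact ⟨ext g, ext_of_not_mem g, fun x hx => congr_fun hg ⟨x, hx⟩⟩

theorem isExitFun_exitFun (hd : 0 < d) {A : Set (Site d)} (hA : A.Finite) :
    IsExitFun d A (exitFun d A) := by
  rw [exitFun, dif_pos (exists_isExitFun hd hA)]
  exact (exists_isExitFun hd hA).choose_spec

lemma nsq_nonneg (x : Site d) : 0 ≤ nsq x :=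
  Finset.sum_nonneg fun _ _ => sq_nonneg _

lemma enorm_nonneg (x : Site d) : 0 ≤ enorm x :=
  Real.sqrt_nonneg _

lemma enorm_sq (x : Site d) : enorm x ^ 2 = nsq x :=
  Real.sq_sqrt (nsq_nonneg x)

lemma abs_apply_le_enorm (x : Site d) (i : Fin d) : |(x i : ℝ)| ≤ enorm x := by
  rw [← Real.sqrt_sq_eq_abs]
  exact Real.sqrt_le_sqrt
    (Finset.single_le_sum (f := fun j => (x j : ℝ) ^ 2) (fun _ _ => sq_nonneg _)
      (Finset.mem_univ i))

lemma nsq_add_unitVec (x : Site d) (i : Fin d) :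
    nsq (x + unitVec d i) = nsq x + 2 * x i + 1 := by
  have h : ∀ j, ((x + unitVec d i) j : ℝ) ^ 2 =
      (x j : ℝ) ^ 2 + if i = j then 2 * (x i : ℝ) + 1 else 0 := by
    intro j
    by_cases hj : i = j
    · subst hj; simp [unitVec]; ring
    · simp [unitVec, Ne.symm hj, hj]
  simp only [nsq, h, Finset.sum_add_distrib, Finset.sum_ite_eq, Finset.mem_univ, if_true]
  ring

lemma nsq_sub_unitVec (x : Site d) (i : Fin d) :
    nsq (x - unitVec d i) = nsq x - 2 * x i + 1 := by
  have h : ∀ j, ((x - unitVec d i) j : ℝ) ^ 2 =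
      (x j : ℝ) ^ 2 + if i = j then 1 - 2 * (x i : ℝ) else 0 := by
    intro j
    by_cases hj : i = j
    · subst hj; simp [unitVec]; ring
    · simp [unitVec, Ne.symm hj, hj]
  simp only [nsq, h, Finset.sum_add_distrib, Finset.sum_ite_eq, Finset.mem_univ, if_true]
  ring

lemma laplacian_nsq (hd : 0 < d) (x : Site d) : laplacian d nsq x = 1 := by
  have hd' : (d : ℝ) ≠ 0 := by positivity
  have hpair : ∀ i : Fin d, nsq x + 2 * x i + 1 + (nsq x - 2 * x i + 1) = 2 * (nsq x + 1) :=
    fun _ => by ring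
  simp only [laplacian_apply, nsq_add_unitVec, nsq_sub_unitVec, hpair, Finset.sum_const,
    Finset.card_univ, Fintype.card_fin, nsmul_eq_mul]
  field_simp
  ring

lemma nsq_add_unitVec_le (x : Site d) (i : Fin d) :
    nsq (x + unitVec d i) ≤ (enorm x + 1) ^ 2 := by
  rw [nsq_add_unitVec, ← enorm_sq]
  nlinarith [abs_le.mp (abs_apply_le_enorm x i)]

lemma nsq_sub_unitVec_le (x : Site d) (i : Fin d) :
    nsq (x - unitVec d i) ≤ (enorm x + 1) ^ 2 := by
  rw [nsq_sub_unitVec, ← enorm_sq]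
  nlinarith [abs_le.mp (abs_apply_le_enorm x i)]

theorem IsExitFun.add_nsq_mem_Icc (hd : 0 < d) {A : Set (Site d)} (hA : A.Finite)
    {e : Site d → ℝ} (he : IsExitFun d A e) {a b : ℝ}
    (hbdry : ∀ x ∈ bdry d A, nsq x ∈ Set.Icc a b) {x : Site d} (hx : x ∈ A) :
    e x + nsq x ∈ Set.Icc a b := by
  obtain ⟨he_off, he_lap⟩ := isExitFun_iff.mp he
  have hΔ : ∀ y ∈ A, laplacian d (e + nsq : Site d → ℝ) y = 0 := fun y hy => by
    rw [map_add, Pi.add_apply, he_lap y hy, laplacian_nsq hd]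
    norm_num
  have hb : ∀ y ∈ bdry d A, (e + nsq : Site d → ℝ) y = nsq y := fun y hy => by
    rw [Pi.add_apply, he_off y hy.1, zero_add]
  exact ⟨le_of_laplacian_nonpos hd hA (fun y hy => (hΔ y hy).le)
      (fun y hy => (hb y hy).symm ▸ (hbdry y hy).1) hx,
    le_of_laplacian_nonneg hd hA (fun y hy => (hΔ y hy).ge)
      (fun y hy => (hb y hy).symm ▸ (hbdry y hy).2) hx⟩

lemma finite_setOf_enorm_lt (R : ℝ) : {x : Site d | enorm x < R}.Finite := by
  refine (Set.finite_Icc (fun _ => -⌈R⌉) (fun _ => ⌈R⌉)).subset fun x hx => ?_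
  have hxi : ∀ i, |(x i : ℝ)| ≤ ⌈R⌉ := fun i =>
    ((abs_apply_le_enorm x i).trans hx.le).trans (Int.le_ceil R)
  exact ⟨fun i => by exact_mod_cast (abs_le.mp (hxi i)).1,
    fun i => by exact_mod_cast (abs_le.mp (hxi i)).2⟩

lemma nsq_mem_Icc_of_mem_bdry {R : ℝ} (hR : 0 ≤ R) {x : Site d}
    (hx : x ∈ bdry d {y | enorm y < R}) : nsq x ∈ Set.Icc (R ^ 2) ((R + 1) ^ 2) := by
  obtain ⟨hxR, i, hi⟩ := hx
  simp only [Set.mem_ofPred_eq, not_lt] at hxR hi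
  refine ⟨enorm_sq x ▸ pow_le_pow_left₀ hR hxR 2, ?_⟩
  have hR1 : ∀ y : Site d, enorm y < R → (enorm y + 1) ^ 2 ≤ (R + 1) ^ 2 := fun y hy =>
    pow_le_pow_left₀ (add_nonneg (enorm_nonneg y) zero_le_one) (add_le_add_left hy.le 1) 2
  rcases hi with hi | hi
  · simpa using (nsq_sub_unitVec_le _ i).trans (hR1 _ hi)
  · simpa using (nsq_add_unitVec_le _ i).trans (hR1 _ hi)

theorem abs_exitFun_setOf_enorm_lt_sub_sq_le (hd : 0 < d) {R : ℝ} (hR : 0 < R) :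
    |exitFun d {x : Site d | enorm x < R} 0 - R ^ 2| ≤ 2 * R + 1 := by
  have hA := finite_setOf_enorm_lt (d := d) R
  have h0 : (0 : Site d) ∈ {x : Site d | enorm x < R} := by simpa [enorm, nsq] using hR
  have h := (isExitFun_exitFun hd hA).add_nsq_mem_Icc hd hA
    (fun _ hx => nsq_mem_Icc_of_mem_bdry hR.le hx) h0
  rw [show nsq (0 : Site d) = 0 by simp [nsq], add_zero] at h
  rw [abs_le]
  constructor <;> nlinarith [h.1, h.2]

lemma ballVol_pos (d : ℕ) : 0 < ballVol d :=
  ENNReal.toReal_pos (Metric.measure_ball_pos _ _ one_pos).ne' measure_ball_lt_top.ne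

lemma lball_eq_setOf_enorm_lt (hd : 0 < d) (n : ℕ) :
    lball d n = {x | enorm x < ((n : ℝ) / ballVol d) ^ ((1 : ℝ) / d)} := by
  ext x
  rw [lball, Set.mem_ofPred_eq, Set.mem_ofPred_eq, one_div,
    Real.lt_rpow_inv_iff_of_pos (enorm_nonneg x) (div_nonneg n.cast_nonneg (ballVol_pos d).le)
      (by positivity),
    Real.rpow_natCast, lt_div_iff₀ (ballVol_pos d), mul_comm]

theorem exit_time_lball_asymp (d : ℕ) (hd : 1 ≤ d) :
    ∃ C : ℝ, ∀ n : ℕ, 1 ≤ n →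
      |exitFun d (lball d n) 0 - ((n : ℝ) / ballVol d) ^ ((2 : ℝ) / (d : ℝ))|
        ≤ C * (n : ℝ) ^ ((1 : ℝ) / (d : ℝ)) := by
  refine ⟨2 / ballVol d ^ ((1 : ℝ) / d) + 1, fun n hn => ?_⟩
  have hω := ballVol_pos d
  set R := ((n : ℝ) / ballVol d) ^ ((1 : ℝ) / d) with hR_def
  have hR_sq : R ^ 2 = ((n : ℝ) / ballVol d) ^ ((2 : ℝ) / d) := by
    rw [← Real.rpow_natCast, ← Real.rpow_mul (by positivity)]
    ring_nf
  have hn_rpow : 1 ≤ (n : ℝ) ^ ((1 : ℝ) / d) :=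
    Real.one_le_rpow (by exact_mod_cast hn) (by positivity)
  rw [lball_eq_setOf_enorm_lt hd, ← hR_sq]
  calc _ ≤ 2 * R + 1 := abs_exitFun_setOf_enorm_lt_sub_sq_le hd (by positivity)
    _ = 2 / ballVol d ^ ((1 : ℝ) / d) * (n : ℝ) ^ ((1 : ℝ) / d) + 1 := by
      rw [hR_def, Real.div_rpow (by positivity) hω.le]
      ring
    _ ≤ _ := by linarith

end RotorRouterPaper
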